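/- Let M be a real 3×3 matrix of the form M_{ij} = ε_{ij}·m_{ij}, where m_{ij} ≥ 0 and ε_{ij} = −1 if exactly one of i, j equals 3 and ε_{ij} = +1 otherwise, and suppose every row sum and every column sum of M equals 1. If for each k ∈ {1,2,3} the triangle inequality √(m_{1k}·m_{2k}) ≤ Σ_{i≠k} √(m_{1i}·m_{2i}) holds, then there exists a matrix P = (p_{ij}) ∈ SU(2,1) with m_{ij} = |p_{ij}|² for all i, j. -/

import Mathlib

open Matrix

/-- The matrix of the Hermitian form of signature (2,1) on ℂ³. -/
def formJ : Matrix (Fin 3) (Fin 3) ℂ := Matrix.diagonal ![1, 1, -1]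

/-- A matrix belongs to SU(2,1) iff it has determinant 1 and preserves the form `formJ`. -/
def SU21 (A : Matrix (Fin 3) (Fin 3) ℂ) : Prop :=
  A.det = 1 ∧ Aᴴ * formJ * A = formJ

/-- The sign `ε i j`, equal to `-1` when exactly one of `i`, `j` is the last index
and `+1` otherwise. -/
def eps (i j : Fin 3) : ℝ := if (i = 2 ↔ j = 2) then 1 else -1

/-!
Take the first row of `P` real, `u = (√m₀ⱼ)`. A second row `v` with `|vⱼ|² = m₁ⱼ` is
`J`-orthogonal to `u` exactly when the numbers `zⱼ = uⱼ conj vⱼ`, of moduli `√(m₀ⱼ m₁ⱼ)`,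
satisfy `z₀ + z₁ = z₂`: they must close up into a possibly degenerate triangle, which is
what the triangle inequalities allow (intermediate value theorem in the angle between
`z₀` and `z₁`). The row sums then say that `u` and `v` are `J`-orthonormal, and the
`J`-twisted conjugate of the cross product `u × v` completes them to a matrix in SU(2,1),
by a `J`-version of Lagrange's identity. The moduli of its third row are forced: the
columns of a matrix preserving the form satisfy the same normalisation as the column
sums of `m`.
-/

open Complex ComplexConjugate

lemma exists_norm_eq_norm_ofReal_add_eq {x y r : ℝ} (hx : 0 ≤ x) (hy : 0 ≤ y)
    (hlow : |x - y| ≤ r) (hupp : r ≤ x + y) :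
    ∃ z : ℂ, ‖z‖ = y ∧ ‖(x : ℂ) + z‖ = r := by
  set f : ℝ → ℝ := fun θ => ‖(x : ℂ) + y * exp (θ * I)‖
  have hf : Continuous f := by fun_prop
  have hf0 : f 0 = x + y := by
    simp only [ofReal_zero, zero_mul, exp_zero, mul_one, f]
    rw [← ofReal_add, Complex.norm_of_nonneg (by positivity)]
  have hfπ : f Real.pi = |x - y| := by
    simp only [exp_pi_mul_I, mul_neg, mul_one, f]
    norm_cast
  obtain ⟨θ, -, hθ⟩ := intermediate_value_Icc' Real.pi_pos.le hf.continuousOn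
    ⟨hfπ ▸ hlow, hf0 ▸ hupp⟩
  exact ⟨y * exp (θ * I), by simp [hy], hθ⟩

lemma exists_norm_eq_mul_conj_eq {b : ℝ} (hb : 0 ≤ b) {a : ℝ} {z : ℂ} (hz : ‖z‖ = a * b) :
    ∃ v : ℂ, ‖v‖ = b ∧ a * conj v = z := by
  refine ⟨b * exp (↑(-z.arg) * I), by
    rw [norm_mul, Complex.norm_exp_ofReal_mul_I, Complex.norm_of_nonneg hb, mul_one], ?_⟩
  have hconj : conj (exp (↑(-z.arg) * I)) = exp (z.arg * I) := by
    rw [← Complex.exp_conj, map_mul, conj_ofReal, conj_I]; push_cast; ring_nf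
  calc (a : ℂ) * conj (b * exp (↑(-z.arg) * I))
      = ‖z‖ * exp (z.arg * I) := by
        rw [map_mul, conj_ofReal, hconj, hz]; push_cast; ring
    _ = z := norm_mul_exp_arg_mul_I z

def jInner (u v : Fin 3 → ℂ) : ℂ := u 0 * conj (v 0) + u 1 * conj (v 1) - u 2 * conj (v 2)

lemma jInner_self (u : Fin 3 → ℂ) :
    jInner u u = ((normSq (u 0) + normSq (u 1) - normSq (u 2) : ℝ) : ℂ) := by
  simp only [jInner, Complex.mul_conj]; push_cast; ring

lemma conj_jInner (u v : Fin 3 → ℂ) : conj (jInner u v) = jInner v u := by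
  simp only [jInner, map_sub, map_add, map_mul, conj_conj]; ring

lemma jInner_self_eq_one {x : Fin 3 → ℂ} {i : Fin 3} (hi : i ≠ 2)
    (h : ∑ j, eps i j * normSq (x j) = 1) : jInner x x = 1 := by
  rw [jInner_self]
  fin_cases i <;> simp [eps, Fin.sum_univ_three] at hi h ⊢ <;> exact_mod_cast h

lemma exists_jInner_eq_zero {a b : Fin 3 → ℝ} (ha : ∀ j, 0 ≤ a j) (hb : ∀ j, 0 ≤ b j)
    (htri : ∀ k, a k * b k ≤ ∑ i ∈ Finset.univ.erase k, a i * b i) :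
    ∃ v : Fin 3 → ℂ, (∀ j, ‖v j‖ = b j) ∧ jInner (fun j => (a j : ℂ)) v = 0 := by
  have h0 := htri 0
  have h1 := htri 1
  have h2 := htri 2
  simp only [Finset.mem_univ, Finset.sum_erase_eq_sub, Fin.sum_univ_three, add_sub_cancel_right]
    at h0 h1 h2
  obtain ⟨z, hz, hz'⟩ := exists_norm_eq_norm_ofReal_add_eq (mul_nonneg (ha 0) (hb 0))
    (mul_nonneg (ha 1) (hb 1)) (r := a 2 * b 2) (abs_sub_le_iff.2 ⟨by linarith, by linarith⟩)
    (by linarith)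
  obtain ⟨v₁, hv₁, hv₁z⟩ := exists_norm_eq_mul_conj_eq (hb 1) hz
  obtain ⟨v₂, hv₂, hv₂z⟩ := exists_norm_eq_mul_conj_eq (hb 2) hz'
  refine ⟨![b 0, v₁, v₂], fun j => ?_, ?_⟩
  · fin_cases j <;> simp [hb 0, hv₁, hv₂]
  · simp [jInner, hv₁z, hv₂z]

lemma mul_formJ_mul_conjTranspose_apply (P : Matrix (Fin 3) (Fin 3) ℂ) (i k : Fin 3) :
    (P * formJ * Pᴴ) i k = jInner (P i) (P k) := by
  simp [formJ, jInner, Matrix.mul_apply, Fin.sum_univ_three]; ring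

def jCross (u v : Fin 3 → ℂ) : Fin 3 → ℂ :=
  ![-conj ((u ⨯₃ v) 0), -conj ((u ⨯₃ v) 1), conj ((u ⨯₃ v) 2)]

lemma jInner_jCross (x u v : Fin 3 → ℂ) : jInner x (jCross u v) = -(x ⬝ᵥ u ⨯₃ v) := by
  simp [jInner, jCross, dotProduct, Fin.sum_univ_three]; ring

lemma jInner_jCross_self (u v : Fin 3 → ℂ) :
    jInner (jCross u v) (jCross u v) = jInner u v * jInner v u - jInner u u * jInner v v := by
  simp [jInner, jCross, cross_apply, map_sub, map_mul]; ring

lemma det_of_jCross (u v : Fin 3 → ℂ) :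
    Matrix.det (Matrix.of ![u, v, jCross u v]) = -jInner (jCross u v) (jCross u v) := by
  rw [jInner_jCross, neg_neg, triple_product_permutation, triple_product_eq_det]
  rfl

lemma mul_mul_eq_of_mul_mul_eq {n R : Type*} [Fintype n] [DecidableEq n] [CommRing R]
    {J P Q : Matrix n n R} (hJ : J * J = 1) (h : P * J * Q = J) : Q * J * P = J := by
  have hinv : P * (J * Q * J) = 1 := by rw [← Matrix.mul_assoc, ← Matrix.mul_assoc, h, hJ]
  calc Q * J * P = J * ((J * Q * J) * P) := by
        rw [← Matrix.mul_assoc, ← Matrix.mul_assoc, ← Matrix.mul_assoc, hJ, Matrix.one_mul]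
    _ = J := by rw [mul_eq_one_comm.mp hinv, Matrix.mul_one]

lemma formJ_mul_formJ : formJ * formJ = 1 := by
  rw [formJ, Matrix.diagonal_mul_diagonal, ← Matrix.diagonal_one]
  congr 1
  ext i
  fin_cases i <;> simp

lemma exists_SU21_of_jInner {u v : Fin 3 → ℂ} (huu : jInner u u = 1) (hvv : jInner v v = 1)
    (huv : jInner u v = 0) : ∃ P, SU21 P ∧ P 0 = u ∧ P 1 = v := by
  set w := jCross u v
  have huw : jInner u w = 0 := by rw [jInner_jCross, dot_self_cross, neg_zero]
  have hvw : jInner v w = 0 := by rw [jInner_jCross, dot_cross_self, neg_zero]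
  have hww : jInner w w = -1 := by rw [jInner_jCross_self, huu, hvv, huv]; ring
  refine ⟨Matrix.of ![u, v, w], ⟨?_, ?_⟩, rfl, rfl⟩
  · rw [det_of_jCross, hww, neg_neg]
  · refine mul_mul_eq_of_mul_mul_eq formJ_mul_formJ ?_
    ext i k
    rw [mul_formJ_mul_conjTranspose_apply]
    change jInner (![u, v, w] i) (![u, v, w] k) = formJ i k
    have hvu : jInner v u = 0 := by rw [← conj_jInner, huv, map_zero]
    have hwu : jInner w u = 0 := by rw [← conj_jInner, huw, map_zero]
    have hwv : jInner w v = 0 := by rw [← conj_jInner, hvw, map_zero]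
    fin_cases i <;> fin_cases k <;>
      simp [formJ, huu, hvv, huv, huw, hvw, hww, hvu, hwu, hwv]

lemma sum_eps_mul_normSq_apply_eq_one {P : Matrix (Fin 3) (Fin 3) ℂ}
    (hP : Pᴴ * formJ * P = formJ) (j : Fin 3) : ∑ i, eps i j * normSq (P i j) = 1 := by
  have h := mul_formJ_mul_conjTranspose_apply Pᴴ j j
  rw [Matrix.conjTranspose_conjTranspose, hP, jInner_self] at h
  simp only [Matrix.conjTranspose_apply, star_def, normSq_conj] at h
  apply ofReal_injective
  fin_cases j <;> simp [formJ, eps, Fin.sum_univ_three] at h ⊢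
  · linear_combination -h
  · linear_combination -h
  · linear_combination h

theorem su21_hat_of_triangle_ineq (m : Fin 3 → Fin 3 → ℝ)
    (hm : ∀ i j, 0 ≤ m i j)
    (hrow : ∀ i : Fin 3, ∑ j : Fin 3, eps i j * m i j = 1)
    (hcol : ∀ j : Fin 3, ∑ i : Fin 3, eps i j * m i j = 1)
    (htri : ∀ k : Fin 3, Real.sqrt (m 0 k * m 1 k) ≤
      ∑ i ∈ Finset.univ.erase k, Real.sqrt (m 0 i * m 1 i)) :
    ∃ P : Matrix (Fin 3) (Fin 3) ℂ, SU21 P ∧ ∀ i j, m i j = Complex.normSq (P i j) := by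
  obtain ⟨v, hv_norm, huv⟩ := exists_jInner_eq_zero (fun j => Real.sqrt_nonneg (m 0 j))
    (fun j => Real.sqrt_nonneg (m 1 j)) (by simpa only [Real.sqrt_mul (hm 0 _)] using htri)
  set u : Fin 3 → ℂ := fun j => (Real.sqrt (m 0 j) : ℂ)
  have hu : ∀ j, normSq (u j) = m 0 j := fun j => by
    rw [normSq_ofReal, Real.mul_self_sqrt (hm 0 j)]
  have hv : ∀ j, normSq (v j) = m 1 j := fun j => by
    rw [normSq_eq_norm_sq, hv_norm, Real.sq_sqrt (hm 1 j)]
  obtain ⟨P, hP, hP0, hP1⟩ := exists_SU21_of_jInner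
    (jInner_self_eq_one (i := 0) (by decide) (by simpa only [hu] using hrow 0))
    (jInner_self_eq_one (i := 1) (by decide) (by simpa only [hv] using hrow 1)) huv
  refine ⟨P, hP, fun i j => ?_⟩
  fin_cases i
  · exact hP0 ▸ (hu j).symm
  · exact hP1 ▸ (hv j).symm
  · have h := (hcol j).trans (sum_eps_mul_normSq_apply_eq_one hP.2 j).symm
    simp only [Fin.sum_univ_three, hP0, hP1, hu, hv, add_right_inj] at h
    exact mul_left_cancel₀ (by unfold eps; split_ifs <;> norm_num) h
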